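/- arXiv:2103.15643 — 10 statements merged into one kernel-verified Lean document; each statement's English description precedes it below -/
import Mathlib

section
/- Let Σ : E → E be defined by Σ(ξ) := e·σ(ξ) and Σ' : E → E by Σ'(ξ) := e·σ⁻¹(ξ) (σ and σ⁻¹ applied entrywise). Then Σ' is a two-sided inverse of Σ on E — i.e. for every ξ ∈ Aⁿ with e·ξ = ξ one has e·σ(e·σ⁻¹(ξ)) = ξ and e·σ⁻¹(e·σ(ξ)) = ξ — if and only if e·σ(e)·e = e and e·σ⁻¹(e)·e = e (where σ(e), σ⁻¹(e) denote entrywise application of σ, σ⁻¹ to the matrix e). -/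
/-! Since `σ (e · σ⁻¹ ξ) = σ(e) · ξ`, the composite `Σ ∘ Σ'` is multiplication by the matrix
`e · σ(e)`, and likewise `Σ' ∘ Σ` is multiplication by `e · σ⁻¹(e)`. A matrix fixes the image of
the idempotent `e` pointwise exactly when it fixes `e` under right multiplication. -/

namespace Matrix

variable {m n R S : Type*}

theorem map_mulVec_symm_apply [Fintype n] [NonAssocSemiring R] [NonAssocSemiring S] (σ : R ≃+* S)
    (M : Matrix m n R) (v : n → S) :
    (fun i => σ ((M *ᵥ fun j => σ.symm (v j)) i)) = M.map σ *ᵥ v := by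
  funext i
  simpa [Function.comp_def] using RingHom.map_mulVec (σ : R →+* S) M (fun j => σ.symm (v j)) i

theorem forall_mulVec_eq_self_iff_mul_eq [Fintype m] [Semiring R] {e : Matrix m m R}
    (he : e * e = e) (M : Matrix m m R) :
    (∀ ξ, e *ᵥ ξ = ξ → M *ᵥ ξ = ξ) ↔ M * e = e := by
  constructor
  · intro h
    refine ext_iff_mulVec.mpr fun v => ?_
    have hev : e *ᵥ (e *ᵥ v) = e *ᵥ v := by rw [mulVec_mulVec, he]
    rw [← mulVec_mulVec, h _ hev]
  · intro h ξ hξ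
    rw [← hξ, mulVec_mulVec, h]

end Matrix

open Matrix in
theorem lift_inverse_iff_general {A : Type*} [Ring A] (σ : A ≃+* A) (n : ℕ)
    (e : Matrix (Fin n) (Fin n) A) (he : e * e = e) :
    (∀ ξ : Fin n → A, e.mulVec ξ = ξ →
        e.mulVec (fun i => σ ((e.mulVec (fun j => σ.symm (ξ j))) i)) = ξ ∧
        e.mulVec (fun i => σ.symm ((e.mulVec (fun j => σ (ξ j))) i)) = ξ)
      ↔ (e * e.map σ * e = e ∧ e * e.map σ.symm * e = e) := by
  have hσ := map_mulVec_symm_apply σ e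
  have hσ' := map_mulVec_symm_apply σ.symm e
  rw [RingEquiv.symm_symm] at hσ'
  simp only [hσ, hσ', mulVec_mulVec, imp_and, forall_and]
  rw [forall_mulVec_eq_self_iff_mul_eq he, forall_mulVec_eq_self_iff_mul_eq he]

/-- For an idempotent `e ∈ Mₙ(A)` and a ring automorphism `σ` of `A`,
the entrywise lift `Σ(ξ) = e·σ(ξ)` of `σ` to the right module `E = {ξ ∈ Aⁿ : e·ξ = ξ}`
has `Σ'(ξ) = e·σ⁻¹(ξ)` as a two-sided inverse on `E` if and only if
`e·σ(e)·e = e` and `e·σ⁻¹(e)·e = e`. -/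
theorem lift_inverse_iff {A : Type*} [Ring A] (σ : A ≃+* A) (n : ℕ) (hn : 0 < n)
    (e : Matrix (Fin n) (Fin n) A) (he : e * e = e) :
    (∀ ξ : Fin n → A, e.mulVec ξ = ξ →
        e.mulVec (fun i => σ ((e.mulVec (fun j => σ.symm (ξ j))) i)) = ξ ∧
        e.mulVec (fun i => σ.symm ((e.mulVec (fun j => σ (ξ j))) i)) = ξ)
      ↔ (e * e.map σ * e = e ∧ e * e.map σ.symm * e = e) :=
  lift_inverse_iff_general σ n e he
end

section
/- The map σ'(b) := e·σ(b)·e maps B into B and is an automorphism of B: σ'(a·b) = σ'(a)·σ'(b) for all a, b ∈ B, and the map σ''(b) := e·σ⁻¹(b)·e is a two-sided inverse of σ' on B, i.e. σ'(σ''(b)) = b and σ''(σ'(b)) = b for every b ∈ B. -/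
/-!
Write `f = σ(e)`: an idempotent with `f e f = f`, by applying `σ` to `e σ⁻¹(e) e = e`. For `a, b`
in the corner of `e`, `σ(a)` and `σ(b)` lie in the corner of `f`, so
`σ(a) σ(b) = σ(a) f f σ(b) = σ(a) f e f σ(b) = σ(a) e σ(b)`, which is multiplicativity of
`b ↦ e σ(b) e`. The inverse property is `e σ⁻¹(e σ(b) e) e = (e σ⁻¹(e) e) b (e σ⁻¹(e) e) = b`.
-/

section Corner

variable {R : Type*} [Semigroup R] {e : R}

theorem IsIdempotentElem.corner_corner (he : IsIdempotentElem e) (x : R) :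
    e * (e * x * e) * e = e * x * e := by
  calc e * (e * x * e) * e = (e * e) * x * (e * e) := by simp only [mul_assoc]
    _ = e * x * e := by rw [he.eq]

theorem mul_eq_mul_mul_of_mem_corner {f x y : R} (hf : IsIdempotentElem f)
    (hfef : f * e * f = f) (hx : f * x * f = x) (hy : f * y * f = y) :
    x * y = x * e * y := by
  calc x * y = f * x * f * (f * y * f) := by rw [hx, hy]
    _ = f * x * (f * f) * y * f := by simp only [mul_assoc]
    _ = f * x * (f * e * f) * y * f := by rw [hf.eq, hfef]
    _ = f * x * f * e * (f * y * f) := by simp only [mul_assoc]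
    _ = x * e * y := by rw [hx, hy]

theorem IsIdempotentElem.corner_mul_of_mem_corner {f x y : R} (he : IsIdempotentElem e)
    (hf : IsIdempotentElem f) (hfef : f * e * f = f) (hx : f * x * f = x)
    (hy : f * y * f = y) : e * (x * y) * e = e * x * e * (e * y * e) := by
  calc e * (x * y) * e = e * x * (e * e) * y * e := by
        rw [mul_eq_mul_mul_of_mem_corner hf hfef hx hy, he.eq]; simp only [mul_assoc]
    _ = e * x * e * (e * y * e) := by simp only [mul_assoc]

theorem corner_sandwich_of_mem_corner {g b : R} (hege : e * g * e = e) (hb : e * b * e = b) :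
    e * (g * b * g) * e = b := by
  calc e * (g * b * g) * e = e * (g * (e * b * e) * g) * e := by rw [hb]
    _ = e * g * e * b * (e * g * e) := by simp only [mul_assoc]
    _ = b := by rw [hege, hb]

def cornerMap (e : R) (τ : R ≃* R) (x : R) : R := e * τ x * e

variable {τ : R ≃* R}

theorem IsIdempotentElem.cornerMap_mem_corner (he : IsIdempotentElem e) (x : R) :
    e * cornerMap e τ x * e = cornerMap e τ x :=
  he.corner_corner (τ x)

theorem IsIdempotentElem.cornerMap_mul (he : IsIdempotentElem e) (h : e * τ.symm e * e = e)
    {a b : R} (ha : e * a * e = a) (hb : e * b * e = b) :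
    cornerMap e τ (a * b) = cornerMap e τ a * cornerMap e τ b := by
  have hτe : IsIdempotentElem (τ e) := he.map τ
  have hτeτe : τ e * e * τ e = τ e := by
    simpa only [map_mul, MulEquiv.apply_symm_apply] using congrArg τ h
  have hτa : τ e * τ a * τ e = τ a := by simpa only [map_mul] using congrArg τ ha
  have hτb : τ e * τ b * τ e = τ b := by simpa only [map_mul] using congrArg τ hb
  simpa only [cornerMap, map_mul] using he.corner_mul_of_mem_corner hτe hτeτe hτa hτb

theorem cornerMap_symm_cornerMap (h : e * τ.symm e * e = e) {b : R} (hb : e * b * e = b) :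
    cornerMap e τ.symm (cornerMap e τ b) = b := by
  simpa only [cornerMap, map_mul, MulEquiv.symm_apply_apply] using
    corner_sandwich_of_mem_corner h hb

end Corner

theorem lifted_automorphism_corner_general {A : Type*} [Ring A] (σ : A ≃+* A) (n : ℕ)
    (e : Matrix (Fin n) (Fin n) A) (he : e * e = e)
    (h1 : e * e.map σ * e = e) (h2 : e * e.map σ.symm * e = e) :
    (∀ b : Matrix (Fin n) (Fin n) A, e * b * e = b →
        e * (e * b.map σ * e) * e = e * b.map σ * e) ∧
    (∀ a b : Matrix (Fin n) (Fin n) A, e * a * e = a → e * b * e = b →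
        e * (a * b).map σ * e = (e * a.map σ * e) * (e * b.map σ * e)) ∧
    (∀ b : Matrix (Fin n) (Fin n) A, e * b * e = b →
        e * (e * b.map σ.symm * e).map σ * e = b ∧
        e * (e * b.map σ * e).map σ.symm * e = b) := by
  let τ := (σ.mapMatrix : Matrix (Fin n) (Fin n) A ≃+* _).toMulEquiv
  have h1' : e * τ.symm.symm e * e = e := h1
  exact ⟨fun b _ ↦ IsIdempotentElem.cornerMap_mem_corner (τ := τ) he b,
    fun a b ha hb ↦ IsIdempotentElem.cornerMap_mul (τ := τ) he h2 ha hb,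
    fun b hb ↦ ⟨cornerMap_symm_cornerMap (τ := τ.symm) h1' hb,
      cornerMap_symm_cornerMap (τ := τ) h2 hb⟩⟩

/-- `σ'(b) := e·σ(b)·e` maps the corner ring `B = {b : e·b·e = b}` into itself,
is multiplicative on `B`, and `σ''(b) := e·σ⁻¹(b)·e` is a two-sided inverse of `σ'` on `B`. -/
theorem lifted_automorphism_corner {A : Type*} [Ring A] (σ : A ≃+* A) (n : ℕ) (hn : 0 < n)
    (e : Matrix (Fin n) (Fin n) A) (he : e * e = e)
    (h1 : e * e.map σ * e = e) (h2 : e * e.map σ.symm * e = e) :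
    (∀ b : Matrix (Fin n) (Fin n) A, e * b * e = b →
        e * (e * b.map σ * e) * e = e * b.map σ * e) ∧
    (∀ a b : Matrix (Fin n) (Fin n) A, e * a * e = a → e * b * e = b →
        e * (a * b).map σ * e = (e * a.map σ * e) * (e * b.map σ * e)) ∧
    (∀ b : Matrix (Fin n) (Fin n) A, e * b * e = b →
        e * (e * b.map σ.symm * e).map σ * e = b ∧
        e * (e * b.map σ * e).map σ.symm * e = b) :=
  lifted_automorphism_corner_general σ n e he h1 h2
end

section
/- If σ moreover satisfies the regularity condition σ(a*) = (σ⁻¹(a))* for all a ∈ A and e is selfadjoint (e = e* for the conjugate transpose), then the automorphism σ'(b) := e·σ(b)·e of B is regular as well: σ'(b*) = (σ''(b))* for every b ∈ B, where σ''(b) := e·σ⁻¹(b)·e is the inverse of σ'. -/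
namespace Matrix

variable {m n α β : Type*}

theorem conjTranspose_map_of_star_comp [Star α] [Star β] (M : Matrix m n α) {f g : α → β}
    (hfg : ∀ a, f (star a) = star (g a)) : Mᴴ.map f = (M.map g)ᴴ :=
  Matrix.ext fun _ _ => hfg _

theorem mul_conjTranspose_mul_of_conjTranspose_eq [Fintype n] [NonUnitalSemiring α]
    [StarRing α] {e : Matrix n n α} (he : eᴴ = e) (M : Matrix n n α) :
    e * Mᴴ * e = (e * M * e)ᴴ := by
  rw [conjTranspose_mul, conjTranspose_mul, he, Matrix.mul_assoc]

end Matrix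

theorem lifted_automorphism_regular_general {A : Type*} [Ring A] [StarRing A] (σ : A ≃+* A)
    (hreg : ∀ a : A, σ (star a) = star (σ.symm a)) (n : ℕ)
    (e : Matrix (Fin n) (Fin n) A) (hsa : e.conjTranspose = e) :
    ∀ b : Matrix (Fin n) (Fin n) A, e * b * e = b →
      e * (b.conjTranspose.map σ) * e = (e * b.map σ.symm * e).conjTranspose := by
  intro b _
  rw [b.conjTranspose_map_of_star_comp hreg]
  exact Matrix.mul_conjTranspose_mul_of_conjTranspose_eq hsa _

/-- if `σ` is regular (`σ(a*) = (σ⁻¹(a))*`) and `e` is a selfadjoint idempotent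
satisfying `e·σ(e)·e = e` and `e·σ⁻¹(e)·e = e`, then the lifted automorphism
`σ'(b) = e·σ(b)·e` of the corner ring `B = {b : e·b·e = b}` is regular as well:
`σ'(b*) = (σ''(b))*` where `σ''(b) = e·σ⁻¹(b)·e`. -/
theorem lifted_automorphism_regular {A : Type*} [Ring A] [StarRing A] (σ : A ≃+* A)
    (hreg : ∀ a : A, σ (star a) = star (σ.symm a)) (n : ℕ) (hn : 0 < n)
    (e : Matrix (Fin n) (Fin n) A) (he : e * e = e) (hsa : e.conjTranspose = e)
    (h1 : e * e.map σ * e = e) (h2 : e * e.map σ.symm * e = e) :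
    ∀ b : Matrix (Fin n) (Fin n) A, e * b * e = b →
      e * (b.conjTranspose.map σ) * e = (e * b.map σ.symm * e).conjTranspose :=
  lifted_automorphism_regular_general σ hreg n e hsa
end

section
/- Let D ∈ R, let (aⱼ, bⱼ, sbⱼ) for j = 1,…,n and (cᵢ, dᵢ, sdᵢ) for i = 1,…,m be families of elements of R satisfying, for all i, j: aⱼ·cᵢ = cᵢ·aⱼ, aⱼ·sdᵢ = sdᵢ·aⱼ, bⱼ·dᵢ = dᵢ·bⱼ, sbⱼ·sdᵢ = sdᵢ·sbⱼ, and cᵢ·sbⱼ = sbⱼ·cᵢ. Set ω₁ := Σⱼ aⱼ·(D·bⱼ − sbⱼ·D) and ω̂₁ := Σᵢ cᵢ·(D·dᵢ − sdᵢ·D). Then Σᵢⱼ cᵢ·((aⱼ·(D·bⱼ − sbⱼ·D))·dᵢ − sdᵢ·(aⱼ·(D·bⱼ − sbⱼ·D))) = Σⱼ aⱼ·(ω̂₁·bⱼ − sbⱼ·ω̂₁). (Interpretation: the non-linear term ω₂ := Σᵢ âᵢ[ω₁, b̂ᵢ]_{σ°} of a twisted inner fluctuation equals Σⱼ aⱼ[ω̂₁,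 bⱼ]_σ, where sbⱼ = σ(bⱼ), cᵢ = âᵢ, dᵢ = b̂ᵢ, sdᵢ = σ°(b̂ᵢ).) -/
/-!
Termwise, both sides equal `c a [[D, b]_sb, d]_sd`: `a` and `c` pass through the twists they
commute with, and the two iterated twisted commutators of `D` agree because `b, d` commute and
so do their twists.
-/

open Finset

/-- The twisted commutator `[x, y]ₛ`, where `s` plays the role of the twist `σ(y)` of `y`. -/
def twistedComm {R : Type*} [Ring R] (x y s : R) : R := x * y - s * x

namespace twistedComm

variable {R : Type*} [Ring R]

theorem mul_left {a x y s : R} (h : Commute a s) :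
    twistedComm (a * x) y s = a * twistedComm x y s := by
  simp only [twistedComm, mul_sub, mul_assoc, ← h.left_comm]

theorem sum_left {ι : Type*} (t : Finset ι) (x : ι → R) (y s : R) :
    twistedComm (∑ i ∈ t, x i) y s = ∑ i ∈ t, twistedComm (x i) y s := by
  simp only [twistedComm, sum_mul, mul_sum, sum_sub_distrib]

theorem twistedComm_comm {D b sb d sd : R} (hbd : Commute b d) (hs : Commute sb sd) :
    twistedComm (twistedComm D b sb) d sd = twistedComm (twistedComm D d sd) b sb := by
  simp only [twistedComm, sub_mul, mul_sub, mul_assoc, hbd.eq, hs.left_comm]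
  abel

theorem mul_twistedComm_mul_comm {D a b sb c d sd : R} (hac : Commute a c)
    (hasd : Commute a sd) (hbd : Commute b d) (hs : Commute sb sd) (hcsb : Commute c sb) :
    c * twistedComm (a * twistedComm D b sb) d sd =
      a * twistedComm (c * twistedComm D d sd) b sb := by
  rw [mul_left hasd, mul_left hcsb, ← mul_assoc, ← mul_assoc, hac.eq, twistedComm_comm hbd hs]

end twistedComm

open twistedComm in
/-- under the listed commutation assumptions, the non-linear term
`ω₂ = Σᵢ cᵢ · [ω₁, dᵢ]_{sdᵢ}` (with `ω₁ = Σⱼ aⱼ·[D,bⱼ]_{sbⱼ}`) equals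
`Σⱼ aⱼ · [ω̂₁, bⱼ]_{sbⱼ}` (with `ω̂₁ = Σᵢ cᵢ·[D,dᵢ]_{sdᵢ}`). -/
theorem nonlinear_term_symmetry {R : Type*} [Ring R] (D : R) (n m : ℕ)
    (a b sb : Fin n → R) (c d sd : Fin m → R)
    (h1 : ∀ (i : Fin m) (j : Fin n), a j * c i = c i * a j)
    (h2 : ∀ (i : Fin m) (j : Fin n), a j * sd i = sd i * a j)
    (h3 : ∀ (i : Fin m) (j : Fin n), b j * d i = d i * b j)
    (h4 : ∀ (i : Fin m) (j : Fin n), sb j * sd i = sd i * sb j)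
    (h5 : ∀ (i : Fin m) (j : Fin n), c i * sb j = sb j * c i) :
    ∑ i, ∑ j, c i * ((a j * (D * b j - sb j * D)) * d i
        - sd i * (a j * (D * b j - sb j * D))) =
      ∑ j, a j * ((∑ i, c i * (D * d i - sd i * D)) * b j
        - sb j * (∑ i, c i * (D * d i - sd i * D))) := by
  show ∑ i, ∑ j, c i * twistedComm (a j * twistedComm D (b j) (sb j)) (d i) (sd i) =
    ∑ j, a j * twistedComm (∑ i, c i * twistedComm D (d i) (sd i)) (b j) (sb j)
  rw [sum_comm]
  refine sum_congr rfl fun j _ => ?_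
  rw [sum_left, mul_sum]
  exact sum_congr rfl fun i _ =>
    mul_twistedComm_mul_comm (h1 i j) (h2 i j) (h3 i j) (h4 i j) (h5 i j)
end

section
/- Let D, u', v', p, q, r, s be elements of R with p·q = 1 and r·s = 1. Then r·p·D·u'·v' = D + p·(D·u' − q·D) + r·(D·v' − s·D) + r·((p·(D·u' − q·D))·v' − s·(p·(D·u' − q·D))). (Interpretation: for a real twisted spectral triple not necessarily fulfilling the twisted first-order condition and a unitary u, with p = σ(u), q = σ(u*), u' = u*, r = σ°(û), s = σ°(û*), v' = û*, this is Ad(σ(u))·D·Ad(u)* = D + σ(u)[D,u*]_σ + σ°(û)[D,û*]_{σ°} + σ°(û)[σ(u)[D,u*]_σ, û*]_{σ°}.) -/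
/-!
If `p * q = 1` then `x + p * (x * a - q * x) = p * x * a`: adding `p` times the twisted
commutator `[x, a]_q` multiplies `x` by `p` on the left and `a` on the right. Apply this to `D`
with `(p, q, u')`, then to `D + p * [D, u']_q` with `(r, s, v')`, after collecting the two
`r`-terms by linearity of the twisted commutator in its first argument.
-/

theorem add_mul_twisted_commutator_eq {R : Type*} [Ring R] {p q : R} (hpq : p * q = 1)
    (x a : R) : x + p * (x * a - q * x) = p * x * a := by
  rw [mul_sub, ← mul_assoc, ← mul_assoc, hpq, one_mul, add_sub_cancel]

/-- with `p·q = 1` and `r·s = 1`,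
`r·p·D·u'·v' = D + p·[D,u']_q + r·[D,v']_s + r·[p·[D,u']_q , v']_s`
(the twisted conjugate action of `Ad(σ(u))` on `D`). -/
theorem twisted_Ad_action_on_D {R : Type*} [Ring R] (D u' v' p q r s : R)
    (hpq : p * q = 1) (hrs : r * s = 1) :
    r * p * D * u' * v' =
      D + p * (D * u' - q * D) + r * (D * v' - s * D) +
        r * ((p * (D * u' - q * D)) * v' - s * (p * (D * u' - q * D))) := by
  set A := p * (D * u' - q * D)
  symm
  calc D + A + r * (D * v' - s * D) + r * (A * v' - s * A)
      = (D + A) + r * ((D + A) * v' - s * (D + A)) := by noncomm_ring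
    _ = r * (D + A) * v' := add_mul_twisted_commutator_eq hrs (D + A) v'
    _ = r * p * D * u' * v' := by
        rw [add_mul_twisted_commutator_eq hpq D u']
        simp only [mul_assoc]
end

section
/- Let u ∈ A be unitary (u*·u = u·u* = 1) and let a₁,…,aₙ, b₁,…,bₙ ∈ A. Set ω₁ := Σⱼ π(aⱼ)∘[D, π(bⱼ)]_σ, ω̂₁ := Σⱼ âⱼ∘[D, b̂ⱼ]_{σ°}, ω₂ := Σⱼ âⱼ∘[ω₁, b̂ⱼ]_{σ°} and D_ω := D + ω₁ + ω̂₁ + ω₂. Define the gauge-transformed family a'₀ := σ(u)·(1 − Σⱼ aⱼ·σ(bⱼ)), b'₀ := u*, and a'ⱼ := σ(u)·aⱼ, b'ⱼ := bⱼ·u* for 1 ≤ j ≤ n, and let D_{ωᵘ} be built from the family (a'ₖ, b'ₖ)ₖ₌₀,…,ₙ by the same three formulas. Then (π(σ(u)) ∘ (σ(u))^) ∘ D_ω ∘ (π(u*) ∘ (u*)^) = D_{ωᵘ}, where x^ denotes the hat of x ∈ A. -/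
/-- Conjugation `T ↦ J ∘ T ∘ J⁻¹` of a `ℂ`-linear endomorphism by a conjugate-linear
equivalence `J`; applied to `π(a)` it gives the "hat" `â = J∘π(a)∘J⁻¹`. -/
noncomputable def hatConj {V : Type*} [AddCommGroup V] [Module ℂ V]
    (J : V ≃ₗ⋆[ℂ] V) (T : Module.End ℂ V) : Module.End ℂ V where
  toFun x := J (T (J.symm x))
  map_add' x y := by simp
  map_smul' c x := by
    simp only [LinearEquiv.map_smulₛₗ, LinearMap.map_smulₛₗ, RingHom.id_apply,
      map_smulₛₗ, starRingEnd_self_apply]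

/-- The twisted-fluctuated Dirac operator
`D_ω = D + ω₁ + ω̂₁ + ω₂` with `ω₁ = Σⱼ π(aⱼ)[D,π(bⱼ)]_σ`,
`ω̂₁ = Σⱼ âⱼ[D,b̂ⱼ]_{σ°}` and `ω₂ = Σⱼ âⱼ[ω₁,b̂ⱼ]_{σ°}`, where
`[T,π(a)]_σ = T∘π(a) − π(σ(a))∘T` and `[T,â]_{σ°} = T∘â − (σ(a))^∘T`. -/
noncomputable def twistedFluct {V A : Type*} [AddCommGroup V] [Module ℂ V]
    [Ring A] [Algebra ℂ A] (J : V ≃ₗ⋆[ℂ] V) (π : A →ₐ[ℂ] Module.End ℂ V)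
    (σ : A ≃ₐ[ℂ] A) (D : Module.End ℂ V) {n : ℕ} (a b : Fin n → A) : Module.End ℂ V :=
  D + (∑ j, π (a j) * (D * π (b j) - π (σ (b j)) * D))
    + (∑ j, hatConj J (π (a j)) * (D * hatConj J (π (b j)) - hatConj J (π (σ (b j))) * D))
    + (∑ j, hatConj J (π (a j)) *
        ((∑ k, π (a k) * (D * π (b k) - π (σ (b k)) * D)) * hatConj J (π (b j))
          - hatConj J (π (σ (b j))) * (∑ k, π (a k) * (D * π (b k) - π (σ (b k)) * D))))


/-!
For a representation `P` write `F_P(T) = T + Σⱼ P(aⱼ)[T, P(bⱼ)]_σ`. Since `ω₁ ↦ ω̂₁ + ω₂`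
is additive, `D_ω = F_{π°}(F_π(D))`, where `π° = (·)^ ∘ π`. Passing to the gauge-transformed
family turns `F_P(T)` into `P(σu) F_P(T) P(u*)` for every `T`: the new one-form is
`P(σu) ω P(u*) + P(σu)[T, P(u*)]_σ`, the factor `1 - Σⱼ aⱼσ(bⱼ)` in `a'₀` cancelling the cross
terms, and `P(σu)[T, P(u*)]_σ = P(σu) T P(u*) - T` because `σ(u)σ(u*) = 1`. By the order-zero
condition, conjugating by elements of `π(A)` commutes with `F_{π°}`, which gives the claim.
-/

noncomputable def hatConjRingHom {V : Type*} [AddCommGroup V] [Module ℂ V]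
    (J : V ≃ₗ⋆[ℂ] V) : Module.End ℂ V →+* Module.End ℂ V where
  toFun := hatConj J
  map_one' := by ext; simp [hatConj]
  map_mul' _ _ := by ext; simp [hatConj]
  map_zero' := by ext; simp [hatConj]
  map_add' _ _ := by ext; simp [hatConj]

@[simp]
lemma hatConjRingHom_apply {V : Type*} [AddCommGroup V] [Module ℂ V] (J : V ≃ₗ⋆[ℂ] V)
    (T : Module.End ℂ V) : hatConjRingHom J T = hatConj J T :=
  rfl

section TwistedFluctuation

variable {A R F G : Type*} [Ring R] [FunLike F A R] [FunLike G A A]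

def twistedFluctuation (P : F) (σ : G) {n : ℕ} (a b : Fin n → A) (T : R) : R :=
  T + ∑ j, P (a j) * (T * P (b j) - P (σ (b j)) * T)

theorem twistedFluctuation_gauge [Ring A] [RingHomClass F A R] [MulHomClass G A A]
    (P : F) (σ : G) {n : ℕ} (a b : Fin n → A) {s t : A} (hst : s * σ t = 1) (T : R) :
    twistedFluctuation P σ (Fin.cons (s * (1 - ∑ j, a j * σ (b j))) fun j => s * a j)
        (Fin.cons t fun j => b j * t) T =
      P s * twistedFluctuation P σ a b T * P t := by
  have hPst : P s * P (σ t) = 1 := by rw [← map_mul, hst, map_one]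
  have summand : ∀ j, P (s * a j) * (T * P (b j * t) - P (σ (b j * t)) * T) =
      P s * (P (a j) * (T * P (b j) - P (σ (b j)) * T)) * P t +
        P s * (P (a j) * P (σ (b j))) * (T * P t - P (σ t) * T) := by
    intro j
    simp only [map_mul]
    noncomm_ring
  simp only [twistedFluctuation, Fin.sum_univ_succ, Fin.cons_zero, Fin.cons_succ, summand,
    Finset.sum_add_distrib, ← Finset.mul_sum, ← Finset.sum_mul]
  simp only [map_mul, map_sub, map_one, map_sum]
  set S := ∑ j, P (a j) * P (σ (b j))
  set ω := ∑ j, P (a j) * (T * P (b j) - P (σ (b j)) * T)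
  calc T + (P s * (1 - S) * (T * P t - P (σ t) * T) +
          (P s * ω * P t + P s * S * (T * P t - P (σ t) * T)))
      = T + P s * T * P t - P s * P (σ t) * T + P s * ω * P t := by noncomm_ring
    _ = P s * (T + ω) * P t := by rw [hPst, one_mul]; noncomm_ring

theorem twistedFluctuation_mul_mul (P : F) (σ : G) {n : ℕ} (a b : Fin n → A) {p q : R}
    (hp : ∀ x, Commute p (P x)) (hq : ∀ x, Commute q (P x)) (T : R) :
    twistedFluctuation P σ a b (p * T * q) = p * twistedFluctuation P σ a b T * q := by
  have summand : ∀ j, P (a j) * (p * T * q * P (b j) - P (σ (b j)) * (p * T * q)) =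
      p * (P (a j) * (T * P (b j) - P (σ (b j)) * T)) * q := by
    intro j
    simp only [mul_sub, sub_mul, mul_assoc, (hq (b j)).eq, (hp (a j)).symm.left_comm,
      (hp (σ (b j))).symm.left_comm]
  simp only [twistedFluctuation, summand, ← Finset.mul_sum, ← Finset.sum_mul, mul_add, add_mul]

end TwistedFluctuation

theorem twistedFluct_eq_twistedFluctuation {V A : Type*} [AddCommGroup V] [Module ℂ V]
    [Ring A] [Algebra ℂ A] (J : V ≃ₗ⋆[ℂ] V) (π : A →ₐ[ℂ] Module.End ℂ V)
    (σ : A ≃ₐ[ℂ] A) (D : Module.End ℂ V) {n : ℕ} (a b : Fin n → A) :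
    twistedFluct J π σ D a b =
      twistedFluctuation ((hatConjRingHom J).comp (π : A →+* Module.End ℂ V)) σ a b
        (twistedFluctuation π σ a b D) := by
  simp only [twistedFluct, twistedFluctuation, RingHom.comp_apply, RingHom.coe_coe,
    hatConjRingHom_apply, add_mul, mul_add, add_sub_add_comm, Finset.sum_add_distrib, add_assoc]

theorem gauge_transform_eq_twisted_Ad_general {V A : Type*} [AddCommGroup V] [Module ℂ V]
    [Ring A] [Algebra ℂ A] [StarRing A]
    (π : A →ₐ[ℂ] Module.End ℂ V) (J : V ≃ₗ⋆[ℂ] V)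
    (σ : A ≃ₐ[ℂ] A)
    (hzero : ∀ a b : A, π a * hatConj J (π b) = hatConj J (π b) * π a)
    (D : Module.End ℂ V)
    (u : A) (hu2 : u * star u = 1)
    (n : ℕ) (a b : Fin n → A) :
    (π (σ u) * hatConj J (π (σ u))) * twistedFluct J π σ D a b *
        (π (star u) * hatConj J (π (star u))) =
      twistedFluct J π σ D
        (Fin.cons (σ u * (1 - ∑ j, a j * σ (b j))) (fun j => σ u * a j))
        (Fin.cons (star u) (fun j => b j * star u)) := by
  have hunit : σ u * σ (star u) = 1 := by rw [← map_mul, hu2, map_one]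
  have hcomm (x y : A) :
      Commute (π x) ((hatConjRingHom J).comp (π : A →+* Module.End ℂ V) y) :=
    hzero x y
  rw [twistedFluct_eq_twistedFluctuation, twistedFluct_eq_twistedFluctuation,
    twistedFluctuation_gauge _ _ _ _ hunit, twistedFluctuation_gauge _ _ _ _ hunit,
    twistedFluctuation_mul_mul _ _ _ _ (hcomm _) (hcomm _)]
  simp only [RingHom.comp_apply, RingHom.coe_coe, hatConjRingHom_apply, hzero (σ u) (σ u),
    mul_assoc]

/-- for a unitary `u`, the twisted conjugate action
`(π(σ(u))∘(σ(u))^) ∘ D_ω ∘ (π(u*)∘(u*)^)` of `Ad(u)` on the twisted-fluctuated operator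
`D_ω` equals the operator `D_{ωᵘ}` built by the same formulas from the gauge-transformed
family `a'₀ = σ(u)(1 − Σⱼ aⱼσ(bⱼ))`, `b'₀ = u*`, `a'ⱼ = σ(u)aⱼ`, `b'ⱼ = bⱼu*`. -/
theorem gauge_transform_eq_twisted_Ad {V A : Type*} [AddCommGroup V] [Module ℂ V]
    [Ring A] [Algebra ℂ A] [StarRing A]
    (π : A →ₐ[ℂ] Module.End ℂ V) (J : V ≃ₗ⋆[ℂ] V)
    (ε : ℂ) (hε : ε = 1 ∨ ε = -1) (hJJ : ∀ v : V, J (J v) = ε • v)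
    (σ : A ≃ₐ[ℂ] A) (hreg : ∀ a : A, σ (star a) = star (σ.symm a))
    (hzero : ∀ a b : A, π a * hatConj J (π b) = hatConj J (π b) * π a)
    (D : Module.End ℂ V) (ε' : ℂ) (hε' : ε' = 1 ∨ ε' = -1)
    (hJD : ∀ v : V, J (D v) = ε' • D (J v))
    (u : A) (hu1 : star u * u = 1) (hu2 : u * star u = 1)
    (n : ℕ) (a b : Fin n → A) :
    (π (σ u) * hatConj J (π (σ u))) * twistedFluct J π σ D a b *
        (π (star u) * hatConj J (π (star u))) =
      twistedFluct J π σ D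
        (Fin.cons (σ u * (1 - ∑ j, a j * σ (b j))) (fun j => σ u * a j))
        (Fin.cons (star u) (fun j => b j * star u)) :=
  gauge_transform_eq_twisted_Ad_general π J σ hzero D u hu2 n a b
end

section
/- Let a₁,…,aₙ, b₁,…,bₙ ∈ A be a twisted normalised family, i.e. Σⱼ aⱼ·σ(bⱼ) = 1. Then the family (bⱼ*, aⱼ*)ⱼ is also twisted normalised, Σⱼ bⱼ*·σ(aⱼ*) = 1, and the adjoint of the associated twisted one-form is (Σⱼ π(aⱼ)·(D·π(bⱼ) − π(σ(bⱼ))·D))* = Σⱼ π(bⱼ*)·(D·π(aⱼ*) − π(σ(aⱼ*))·D). -/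
/-!
Applying `σ⁻¹` and then `*` to `∑ aⱼ σ(bⱼ) = 1` gives `∑ bⱼ* (σ⁻¹ aⱼ)* = 1`, and the regularity
condition turns `(σ⁻¹ aⱼ)*` into `σ(aⱼ*)`. For the one-forms, expanding both sides leaves the
common sum `∑ π(bⱼ*) D π(aⱼ*)` minus a correction term: `D · π(∑ aⱼ σ(bⱼ))*` on the left and
`π(∑ bⱼ* σ(aⱼ*)) · D` on the right, both equal to `D` by the two normalisations.
-/

open Finset

def IsTwistedNormalised {A ι : Type*} [Semiring A] [Fintype ι] (σ : A ≃+* A) (a b : ι → A) :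
    Prop :=
  ∑ j, a j * σ (b j) = 1

theorem IsTwistedNormalised.star {A ι : Type*} [Semiring A] [StarRing A] [Fintype ι]
    {σ : A ≃+* A} (hreg : ∀ a : A, σ (star a) = star (σ.symm a)) {a b : ι → A}
    (h : IsTwistedNormalised σ a b) :
    IsTwistedNormalised σ (fun j ↦ star (b j)) (fun j ↦ star (a j)) := by
  have hsymm : ∑ j, σ.symm (a j) * b j = 1 := by
    simpa only [map_sum, map_mul, RingEquiv.symm_apply_apply, map_one] using congrArg σ.symm h
  simpa only [IsTwistedNormalised, hreg, ← star_mul, ← star_sum, star_one] using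
    congrArg Star.star hsymm

section OneForm

variable {R ι : Type*} [Ring R] [Fintype ι]

theorem sum_mul_sub_mul_eq (D : R) (x y z : ι → R) :
    ∑ j, x j * (D * y j - z j * D) = ∑ j, x j * D * y j - (∑ j, x j * z j) * D := by
  simp only [mul_sub, sum_sub_distrib, sum_mul, mul_assoc]

theorem star_sum_mul_sub_mul_eq [StarRing R] {D : R} (hD : IsSelfAdjoint D) (x y z : ι → R) :
    star (∑ j, x j * (D * y j - z j * D)) =
      ∑ j, star (y j) * D * star (x j) - D * ∑ j, star (z j) * star (x j) := by
  simp only [star_sum, star_mul, star_sub, hD.star_eq, mul_sum, ← sum_sub_distrib, sub_mul,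
    mul_assoc]

end OneForm

/-- if `(aⱼ,bⱼ)` is twisted normalised then so is `(bⱼ*, aⱼ*)`, and the
adjoint of the associated twisted one-form is the twisted one-form of `(bⱼ*, aⱼ*)`. -/
theorem eta_adjoint {A R : Type*} [Ring A] [StarRing A] [Ring R] [StarRing R]
    (σ : A ≃+* A) (hreg : ∀ a : A, σ (star a) = star (σ.symm a))
    (π : A →+* R) (hπ : ∀ a : A, π (star a) = star (π a))
    (D : R) (hD : star D = D)
    (n : ℕ) (a b : Fin n → A) (hnorm : (∑ j, a j * σ (b j)) = 1) :
    (∑ j, star (b j) * σ (star (a j))) = 1 ∧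
    star (∑ j, π (a j) * (D * π (b j) - π (σ (b j)) * D)) =
      ∑ j, π (star (b j)) * (D * π (star (a j)) - π (σ (star (a j))) * D) := by
  have hnorm' : ∑ j, star (b j) * σ (star (a j)) = 1 := IsTwistedNormalised.star hreg hnorm
  have hleft : ∑ j, star (π (σ (b j))) * star (π (a j)) = 1 := by
    simp only [← star_mul, ← star_sum, ← map_mul, ← map_sum, hnorm, map_one, star_one]
  have hright : ∑ j, π (star (b j)) * π (σ (star (a j))) = 1 := by
    simp only [← map_mul, ← map_sum, hnorm', map_one]
  refine ⟨hnorm', ?_⟩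
  rw [star_sum_mul_sub_mul_eq hD, sum_mul_sub_mul_eq, hleft, hright, mul_one, one_mul]
  simp only [hπ]
end

section
/- Let D ∈ R and let (aⱼ, bⱼ, sbⱼ) for j = 1,…,n and (cᵢ, dᵢ, sdᵢ) for i = 1,…,m be families in R satisfying the two normalisation conditions Σⱼ aⱼ·sbⱼ = 1 and Σᵢ cᵢ·sdᵢ = 1. Then Σᵢⱼ aⱼ·cᵢ·D·dᵢ·bⱼ = D + Σⱼ aⱼ·(D·bⱼ − sbⱼ·D) + Σᵢ cᵢ·(D·dᵢ − sdᵢ·D) + Σⱼ aⱼ·(Ω̂·bⱼ − sbⱼ·Ω̂), where Ω̂ := Σᵢ cᵢ·(D·dᵢ − sdᵢ·D). (Interpretation: with cᵢ = âᵢ, dᵢ = b̂ᵢ, sbⱼ = σ(bⱼ), sdᵢ = σ°(b̂ᵢ), the action (μ(A), D) of the image of a twisted normalised element A under the homomorphism μ(A) = A ⊗ Â on the Dirac operator D equals the twisted fluctuation D_ω = D + ω₁ + ω̂₁ + ω₂ with ω = η(A).) -/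
/-! If `∑ aᵢ σbᵢ = 1`, then `∑ aᵢ X bᵢ = X + ∑ aᵢ (X bᵢ - σbᵢ X)` for every `X`. Applied over the
`cᵢ` with `X = D` this gives `∑ cᵢ D dᵢ = D + Ω̂`; applied over the `aⱼ` with `X = D + Ω̂` it gives
the fluctuation, once the twisted commutator is split additively in `X`. -/

open Finset

theorem Finset.sum_mul_mul_eq_add_sum_mul_sub {ι R : Type*} [Ring R] (s : Finset ι)
    (a b σb : ι → R) (h : ∑ i ∈ s, a i * σb i = 1) (X : R) :
    ∑ i ∈ s, a i * X * b i = X + ∑ i ∈ s, a i * (X * b i - σb i * X) := by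
  have hX : ∑ i ∈ s, a i * σb i * X = X := by rw [← sum_mul, h, one_mul]
  simp only [mul_sub, sum_sub_distrib, ← mul_assoc, hX]
  abel

theorem Finset.sum_mul_add_mul_sub {ι R : Type*} [Ring R] (s : Finset ι)
    (a b σb : ι → R) (X Y : R) :
    ∑ i ∈ s, a i * ((X + Y) * b i - σb i * (X + Y)) =
      ∑ i ∈ s, a i * (X * b i - σb i * X) + ∑ i ∈ s, a i * (Y * b i - σb i * Y) := by
  rw [← sum_add_distrib]
  refine sum_congr rfl fun i _ => ?_
  noncomm_ring

/-- for normalised families `Σⱼ aⱼ·sbⱼ = 1` and `Σᵢ cᵢ·sdᵢ = 1`, the action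
`Σᵢⱼ aⱼ·cᵢ·D·dᵢ·bⱼ` equals the twisted fluctuation
`D + ω₁ + ω̂₁ + ω₂` with `ω̂₁ = Σᵢ cᵢ·(D·dᵢ − sdᵢ·D)`. -/
theorem semigroup_action_is_fluctuation {R : Type*} [Ring R] (D : R) (n m : ℕ)
    (a b sb : Fin n → R) (c d sd : Fin m → R)
    (hab : (∑ j, a j * sb j) = 1) (hcd : (∑ i, c i * sd i) = 1) :
    ∑ i, ∑ j, a j * c i * D * d i * b j =
      D + (∑ j, a j * (D * b j - sb j * D)) + (∑ i, c i * (D * d i - sd i * D)) +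
        ∑ j, a j * ((∑ i, c i * (D * d i - sd i * D)) * b j
          - sb j * (∑ i, c i * (D * d i - sd i * D))) := by
  set Ω := ∑ i, c i * (D * d i - sd i * D)
  have inner (j : Fin n) : ∑ i, a j * c i * D * d i * b j = a j * (D + Ω) * b j := by
    rw [← univ.sum_mul_mul_eq_add_sum_mul_sub c d sd hcd D, mul_sum, sum_mul]
    simp only [mul_assoc]
  calc ∑ i, ∑ j, a j * c i * D * d i * b j
      = ∑ j, a j * (D + Ω) * b j := by rw [sum_comm]; exact sum_congr rfl fun j _ => inner j
    _ = D + Ω + ∑ j, a j * ((D + Ω) * b j - sb j * (D + Ω)) :=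
        univ.sum_mul_mul_eq_add_sum_mul_sub a b sb hab (D + Ω)
    _ = _ := by rw [sum_mul_add_mul_sub]; abel
end

section
/- Let m° : Aᵐᵒᵖ ⊗[ℂ] A → Aᵐᵒᵖ be the unique ℂ-linear map with m°(op(a) ⊗ b) = op(a)·op(σ⁻¹(b)) = op(σ⁻¹(b)·a). Then the set Pert(Aᵐᵒᵖ, σ°) := { x ∈ Aᵐᵒᵖ ⊗[ℂ] A : m°(x) = op(1) } is a submonoid of Aᵐᵒᵖ ⊗[ℂ] A: it contains op(1) ⊗ 1 and is closed under the tensor-product multiplication (op(a) ⊗ b)·(op(a') ⊗ b') = op(a'·a) ⊗ b·b'. -/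
/-!
`m°` intertwines multiplication in `Aᵐᵒᵖ ⊗ A` with the `σ`-twisted bimodule action
`(z ⊗ b) • w = z * w * op (σ⁻¹ b)` on `Aᵐᵒᵖ`: `m° (x * y) = x • m° y`. Hence if `m° y = op 1`
then `m° (x * y) = x • op 1 = m° x`, which gives closure under multiplication.
-/

open scoped TensorProduct

/-- The unique `ℂ`-linear map `m° : Aᵐᵒᵖ ⊗[ℂ] A → Aᵐᵒᵖ` with
`m°(op a ⊗ b) = op a · op(σ⁻¹ b) = op (σ⁻¹(b)·a)`. -/
noncomputable def oppTwistedNormMap {A : Type*} [Ring A] [Algebra ℂ A] (σ : A ≃ₐ[ℂ] A) :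
    Aᵐᵒᵖ ⊗[ℂ] A →ₗ[ℂ] Aᵐᵒᵖ :=
  (LinearMap.mul' ℂ Aᵐᵒᵖ).comp
    (TensorProduct.map LinearMap.id
      ((MulOpposite.opLinearEquiv ℂ).toLinearMap.comp σ.symm.toLinearMap))

section

variable {A : Type*} [Ring A] [Algebra ℂ A] (σ : A ≃ₐ[ℂ] A)

lemma oppTwistedNormMap_tmul (z : Aᵐᵒᵖ) (b : A) :
    oppTwistedNormMap σ (z ⊗ₜ[ℂ] b) = z * MulOpposite.op (σ.symm b) := by
  simp [oppTwistedNormMap]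

lemma oppTwistedNormMap_tmul_mul (z : Aᵐᵒᵖ) (b : A) (y : Aᵐᵒᵖ ⊗[ℂ] A) :
    oppTwistedNormMap σ ((z ⊗ₜ[ℂ] b) * y) =
      z * oppTwistedNormMap σ y * MulOpposite.op (σ.symm b) := by
  induction y using TensorProduct.induction_on with
  | zero => simp
  | tmul w b' =>
      rw [Algebra.TensorProduct.tmul_mul_tmul, oppTwistedNormMap_tmul, oppTwistedNormMap_tmul,
        map_mul, MulOpposite.op_mul]
      simp only [mul_assoc]
  | add y₁ y₂ h₁ h₂ => rw [mul_add, map_add, map_add, h₁, h₂, mul_add, add_mul]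

lemma oppTwistedNormMap_mul_of_eq_one {y : Aᵐᵒᵖ ⊗[ℂ] A}
    (hy : oppTwistedNormMap σ y = MulOpposite.op 1) (x : Aᵐᵒᵖ ⊗[ℂ] A) :
    oppTwistedNormMap σ (x * y) = oppTwistedNormMap σ x := by
  induction x using TensorProduct.induction_on with
  | zero => simp
  | tmul z b => rw [oppTwistedNormMap_tmul_mul, hy, MulOpposite.op_one, mul_one,
      oppTwistedNormMap_tmul]
  | add x₁ x₂ h₁ h₂ => rw [add_mul, map_add, map_add, h₁, h₂]

end

/-- the set `Pert(Aᵐᵒᵖ,σ°) = {x ∈ Aᵐᵒᵖ ⊗ A : m°(x) = op 1}` contains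
`op 1 ⊗ 1` and is closed under the tensor-product multiplication, i.e. it is a submonoid. -/
theorem opp_pert_is_submonoid {A : Type*} [Ring A] [Algebra ℂ A] (σ : A ≃ₐ[ℂ] A) :
    (∀ a b : A, oppTwistedNormMap σ (MulOpposite.op a ⊗ₜ[ℂ] b) =
        MulOpposite.op (σ.symm b * a)) ∧
    oppTwistedNormMap σ (MulOpposite.op (1 : A) ⊗ₜ[ℂ] (1 : A)) = MulOpposite.op 1 ∧
    ∀ x y : Aᵐᵒᵖ ⊗[ℂ] A,
      oppTwistedNormMap σ x = MulOpposite.op 1 → oppTwistedNormMap σ y = MulOpposite.op 1 →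
      oppTwistedNormMap σ (x * y) = MulOpposite.op 1 := by
  have op_tmul (a b : A) : oppTwistedNormMap σ (MulOpposite.op a ⊗ₜ[ℂ] b) =
      MulOpposite.op (σ.symm b * a) :=
    (oppTwistedNormMap_tmul σ _ b).trans (MulOpposite.op_mul _ _).symm
  refine ⟨op_tmul, ?_, fun x y hx hy => ?_⟩
  · rw [op_tmul, map_one, one_mul]
  · rw [oppTwistedNormMap_mul_of_eq_one σ hy, hx]
end

section
/- For every finite family (𝐚ⱼ, 𝐛ⱼ)ⱼ of elements of B = A_ev ⊕ A_ev there exist six complex numbers φ, φ', σ₁, σ₂, σ¹, σ² such that the twisted-fluctuated operator D_ω := D + ω₁ + ω̂₁ + ω₂ has matrix components: (D_ω)_{αI}^{βJ} = (δ_α¹δ²^β·k_x·(1+φ) + δ_α²δ₁^β·conj(k_x)·(1+φ'))·δ_I^J on the particle–particle block; (D_ω)_{α'I'}^{β'J'} = (δ_{α'}¹δ₂^{β'}·conj(k_x)·(1+conj(φ)) + δ_{α'}²δ₁^{β'}·k_x·(1+conj(φ')))·δ_{I'}^{J'} on the antiparticle–antiparticle block; (D_ω)_{α'I'}^{βJ}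 = k_y·δ_{α'}¹δ₁^β·(σ_{I'} + δ_{I'}¹)·(conj(σ^J) + δ₁^J); and (D_ω)_{αI}^{β'J'} = conj(k_y)·δ_α¹δ₁^{β'}·(conj(σ_I) + δ_I¹)·(σ^{J'} + δ₁^{J'}), where σ_I ∈ {σ₁, σ₂} and σ^J ∈ {σ¹, σ²} according to the index. -/
/-- Index set of `H = ℂ⁸`: the particle sector `(α, I)` and the antiparticle
sector `(α', I')`, each in `{1,2}×{1,2}` (coded as `Fin 2 × Fin 2`). -/
abbrev ModelIdx := (Fin 2 × Fin 2) ⊕ (Fin 2 × Fin 2)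

/-- `A_ev = ℂ ⊕ ℂ ⊕ M₂(ℂ)`. -/
abbrev Aev := ℂ × ℂ × Matrix (Fin 2) (Fin 2) ℂ

/-- `B = A_ev ⊕ A_ev`. -/
abbrev Bev := Aev × Aev

/-- The Dirac operator of the `U(1)×U(2)` model, as a matrix on `ℂ⁸`. -/
noncomputable def modelD (kx ky : ℂ) : Matrix ModelIdx ModelIdx ℂ :=
  Matrix.of fun p q =>
    match p, q with
    | Sum.inl (α, i), Sum.inl (β, j) =>
        (kx * (if α = 0 then 1 else 0) * (if β = 1 then 1 else 0)
          + (starRingEnd ℂ) kx * (if α = 1 then 1 else 0) * (if β = 0 then 1 else 0))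
          * (if i = j then 1 else 0)
    | Sum.inr (α', i'), Sum.inr (β', j') =>
        ((starRingEnd ℂ) kx * (if α' = 0 then 1 else 0) * (if β' = 1 then 1 else 0)
          + kx * (if α' = 1 then 1 else 0) * (if β' = 0 then 1 else 0))
          * (if i' = j' then 1 else 0)
    | Sum.inr (α', i'), Sum.inl (β, j) =>
        ky * (if α' = 0 then 1 else 0) * (if β = 0 then 1 else 0)
          * (if i' = 0 then 1 else 0) * (if j = 0 then 1 else 0)
    | Sum.inl (α, i), Sum.inr (β', j') =>
        (starRingEnd ℂ) ky * (if α = 0 then 1 else 0) * (if β' = 0 then 1 else 0)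
          * (if i = 0 then 1 else 0) * (if j' = 0 then 1 else 0)

/-- The representation `π` of `B = A_ev ⊕ A_ev` on `ℂ⁸`: on the particle sector the
diagonal action `(λ_R^r, λ_L^l)` (identity on `I`), on the antiparticle sector `m^l`
for `α' = 1` and `m^r` for `α' = 2`. Here `a = ((λ_R^r, λ_L^r, m^r), (λ_R^l, λ_L^l, m^l))`. -/
noncomputable def modelPi (a : Bev) : Matrix ModelIdx ModelIdx ℂ :=
  Matrix.of fun p q =>
    match p, q with
    | Sum.inl (α, i), Sum.inl (β, j) =>
        if α = β ∧ i = j then (if α = 0 then a.1.1 else a.2.2.1) else 0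
    | Sum.inr (α', i'), Sum.inr (β', j') =>
        if α' = β' then (if α' = 0 then a.2.2.2 i' j' else a.1.2.2 i' j') else 0
    | _, _ => 0

/-- The flip automorphism `σ((aʳ, aˡ)) = (aˡ, aʳ)` of `B`. -/
def modelFlip (a : Bev) : Bev := (a.2, a.1)

/-- The exchange of the two sectors of `ℂ⁸`. -/
def swapIdx : ModelIdx → ModelIdx
  | Sum.inl x => Sum.inr x
  | Sum.inr x => Sum.inl x

/-- Conjugation `M ↦ J∘M∘J⁻¹` by the real structure `J` (sector exchange composed with
componentwise complex conjugation, `J² = 1`), at the level of matrices: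
`(J M J⁻¹)ₚ,q = conj (M_{swap p, swap q})`. Applied to `modelPi a` it gives the hat `â`. -/
noncomputable def modelHat (M : Matrix ModelIdx ModelIdx ℂ) : Matrix ModelIdx ModelIdx ℂ :=
  Matrix.of fun p q => (starRingEnd ℂ) (M (swapIdx p) (swapIdx q))

/-!
Each of `D`, `ω₁`, `ω̂₁`, `ω₂` has the shape `dressedD kx ky f g h w L U`: the `kx`-couplings of
`D` rescaled by `f, g` (particles) and `h, w` (antiparticles), and its `ky`-couplings `E₁₁ ⊗ E₁₁`
replaced by `E₁₁ ⊗ L` and `E₁₁ ⊗ U`. For `F` of this shape, `∑ⱼ π(aⱼ)[F, π(bⱼ)]_σ` rescales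
`f, g` by `φ, φ'`, kills `h, w`, and replaces `L, U` by `S L, U T` for fixed `2 × 2` matrices
`S, T`. Conjugation by `J` is multiplicative and fixes `D`, so `ω̂₁ = J ω₁ J⁻¹` and
`ω₂ = J (∑ⱼ π(aⱼ)[J ω₁ J⁻¹, π(bⱼ)]_σ) J⁻¹`. Adding up, the `ky`-coupling of `D_ω` becomes the
rank-one matrix `(1 + S) E₁₁ (1 + T̄)`, whose entries factor as claimed.
-/

theorem Matrix.mul_single_mul_apply {l m n o R : Type*} [Fintype m] [Fintype n] [DecidableEq m]
    [DecidableEq n] [Semiring R] (A : Matrix l m R) (k : m) (k' : n) (c : R) (B : Matrix n o R)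
    (i : l) (j : o) : (A * Matrix.single k k' c * B) i j = A i k * c * B k' j := by
  simp [Matrix.mul_apply, Matrix.single_apply, ite_and]

theorem modelHat_mul (M N : Matrix ModelIdx ModelIdx ℂ) :
    modelHat (M * N) = modelHat M * modelHat N := by
  ext (p | p) (q | q) <;>
    simp only [modelHat, swapIdx, Matrix.of_apply, Matrix.mul_apply, Fintype.sum_sum_type,
      map_add, map_sum, map_mul] <;> exact add_comm _ _

theorem modelHat_sub (M N : Matrix ModelIdx ModelIdx ℂ) :
    modelHat (M - N) = modelHat M - modelHat N := by
  ext p q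
  simp [modelHat]

theorem modelHat_sum {ι : Type*} [Fintype ι] (M : ι → Matrix ModelIdx ModelIdx ℂ) :
    modelHat (∑ j, M j) = ∑ j, modelHat (M j) := by
  ext p q
  simp [modelHat, Matrix.sum_apply]

theorem modelHat_modelHat (M : Matrix ModelIdx ModelIdx ℂ) : modelHat (modelHat M) = M := by
  ext (p | p) (q | q) <;> simp [modelHat, swapIdx]

noncomputable def dressedD (kx ky f g h w : ℂ) (L U : Matrix (Fin 2) (Fin 2) ℂ) :
    Matrix ModelIdx ModelIdx ℂ :=
  Matrix.of fun p q =>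
    match p, q with
    | Sum.inl (α, i), Sum.inl (β, j) =>
        (kx * f * (if α = 0 then 1 else 0) * (if β = 1 then 1 else 0)
          + (starRingEnd ℂ) kx * g * (if α = 1 then 1 else 0) * (if β = 0 then 1 else 0))
          * (if i = j then 1 else 0)
    | Sum.inr (α', i'), Sum.inr (β', j') =>
        ((starRingEnd ℂ) kx * h * (if α' = 0 then 1 else 0) * (if β' = 1 then 1 else 0)
          + kx * w * (if α' = 1 then 1 else 0) * (if β' = 0 then 1 else 0))
          * (if i' = j' then 1 else 0)
    | Sum.inr (α', i'), Sum.inl (β, j) =>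
        ky * (if α' = 0 then 1 else 0) * (if β = 0 then 1 else 0) * L i' j
    | Sum.inl (α, i), Sum.inr (β', j') =>
        (starRingEnd ℂ) ky * (if α = 0 then 1 else 0) * (if β' = 0 then 1 else 0) * U i j'

def phiCoeff (a b : Bev) : ℂ := a.1.1 * (b.2.2.1 - b.2.1)

def phiCoeff' (a b : Bev) : ℂ := a.2.2.1 * (b.1.1 - b.1.2.1)

def sigmaLow (a b : Bev) : Matrix (Fin 2) (Fin 2) ℂ := a.2.2.2 * (b.1.1 • 1 - b.1.2.2)

def sigmaUp (a b : Bev) : Matrix (Fin 2) (Fin 2) ℂ := a.1.1 • (b.2.2.2 - b.2.1 • 1)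

section dressedD

variable (kx ky : ℂ)

theorem dressedD_add (f g h w f' g' h' w' : ℂ) (L U L' U' : Matrix (Fin 2) (Fin 2) ℂ) :
    dressedD kx ky f g h w L U + dressedD kx ky f' g' h' w' L' U' =
      dressedD kx ky (f + f') (g + g') (h + h') (w + w') (L + L') (U + U') := by
  ext (⟨α, i⟩ | ⟨α, i⟩) (⟨β, j⟩ | ⟨β, j⟩) <;>
    simp only [Matrix.add_apply, dressedD, Matrix.of_apply] <;> ring

theorem dressedD_sum {ι : Type*} [Fintype ι] (f g h w : ι → ℂ)
    (L U : ι → Matrix (Fin 2) (Fin 2) ℂ) :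
    ∑ j, dressedD kx ky (f j) (g j) (h j) (w j) (L j) (U j) =
      dressedD kx ky (∑ j, f j) (∑ j, g j) (∑ j, h j) (∑ j, w j) (∑ j, L j) (∑ j, U j) := by
  ext (⟨α, i⟩ | ⟨α, i⟩) (⟨β, j⟩ | ⟨β, j⟩) <;>
    simp only [Matrix.sum_apply, dressedD, Matrix.of_apply, Finset.mul_sum, Finset.sum_mul,
      ← Finset.sum_add_distrib]

theorem modelD_eq_dressedD :
    modelD kx ky = dressedD kx ky 1 1 1 1 (Matrix.single 0 0 1) (Matrix.single 0 0 1) := by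
  ext (⟨α, i⟩ | ⟨α, i⟩) (⟨β, j⟩ | ⟨β, j⟩) <;>
    simp only [modelD, dressedD, Matrix.of_apply, Matrix.single_apply, mul_one] <;>
    fin_cases i <;> fin_cases j <;> simp

theorem modelHat_dressedD (f g h w : ℂ) (L U : Matrix (Fin 2) (Fin 2) ℂ) :
    modelHat (dressedD kx ky f g h w L U) =
      dressedD kx ky (starRingEnd ℂ h) (starRingEnd ℂ w) (starRingEnd ℂ f) (starRingEnd ℂ g)
        (U.map (starRingEnd ℂ)) (L.map (starRingEnd ℂ)) := by
  ext (⟨α, i⟩ | ⟨α, i⟩) (⟨β, j⟩ | ⟨β, j⟩) <;>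
    simp [modelHat, swapIdx, dressedD, apply_ite (starRingEnd ℂ)]

theorem modelHat_modelD : modelHat (modelD kx ky) = modelD kx ky := by
  simp [modelD_eq_dressedD, modelHat_dressedD, Matrix.map_single]

theorem modelPi_mul_twistedComm_dressedD (f g h w : ℂ) (L U : Matrix (Fin 2) (Fin 2) ℂ)
    (a b : Bev) :
    modelPi a * (dressedD kx ky f g h w L U * modelPi b
        - modelPi (modelFlip b) * dressedD kx ky f g h w L U) =
      dressedD kx ky (f * phiCoeff a b) (g * phiCoeff' a b) 0 0
        (sigmaLow a b * L) (U * sigmaUp a b) := by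
  ext (⟨α, i⟩ | ⟨α, i⟩) (⟨β, j⟩ | ⟨β, j⟩) <;>
    simp only [Matrix.mul_apply, Matrix.sub_apply, Matrix.smul_apply, Matrix.one_apply,
      Fintype.sum_sum_type, Fintype.sum_prod_type, Fin.sum_univ_two, modelPi, modelFlip,
      dressedD, phiCoeff, phiCoeff', sigmaLow, sigmaUp, Matrix.of_apply] <;>
    fin_cases α <;> fin_cases β <;> fin_cases i <;> fin_cases j <;> simp <;> ring

end dressedD

section OneForms

variable {ι : Type*} [Fintype ι] (a b : ι → Bev)

noncomputable def twistedOneForm (M : Matrix ModelIdx ModelIdx ℂ) : Matrix ModelIdx ModelIdx ℂ :=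
  ∑ j, modelPi (a j) * (M * modelPi (b j) - modelPi (modelFlip (b j)) * M)

noncomputable def hatTwistedOneForm (M : Matrix ModelIdx ModelIdx ℂ) :
    Matrix ModelIdx ModelIdx ℂ :=
  ∑ j, modelHat (modelPi (a j)) *
    (M * modelHat (modelPi (b j)) - modelHat (modelPi (modelFlip (b j))) * M)

theorem hatTwistedOneForm_eq_modelHat (M : Matrix ModelIdx ModelIdx ℂ) :
    hatTwistedOneForm a b M = modelHat (twistedOneForm a b (modelHat M)) := by
  simp only [hatTwistedOneForm, twistedOneForm, modelHat_sum, modelHat_mul, modelHat_sub,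
    modelHat_modelHat]

theorem twistedOneForm_dressedD (kx ky f g h w : ℂ) (L U : Matrix (Fin 2) (Fin 2) ℂ) :
    twistedOneForm a b (dressedD kx ky f g h w L U) =
      dressedD kx ky (f * ∑ j, phiCoeff (a j) (b j)) (g * ∑ j, phiCoeff' (a j) (b j)) 0 0
        ((∑ j, sigmaLow (a j) (b j)) * L) (U * ∑ j, sigmaUp (a j) (b j)) := by
  simp only [twistedOneForm, modelPi_mul_twistedComm_dressedD, dressedD_sum, Finset.mul_sum,
    Finset.sum_mul, Finset.sum_const_zero]

theorem modelD_add_oneForms_eq_dressedD (kx ky : ℂ) :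
    modelD kx ky + twistedOneForm a b (modelD kx ky) + hatTwistedOneForm a b (modelD kx ky)
        + hatTwistedOneForm a b (twistedOneForm a b (modelD kx ky)) =
      dressedD kx ky (1 + ∑ j, phiCoeff (a j) (b j)) (1 + ∑ j, phiCoeff' (a j) (b j))
        (1 + starRingEnd ℂ (∑ j, phiCoeff (a j) (b j)))
        (1 + starRingEnd ℂ (∑ j, phiCoeff' (a j) (b j)))
        ((1 + ∑ j, sigmaLow (a j) (b j)) * Matrix.single 0 0 1
          * (1 + (∑ j, sigmaUp (a j) (b j)).map (starRingEnd ℂ)))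
        ((1 + (∑ j, sigmaLow (a j) (b j)).map (starRingEnd ℂ)) * Matrix.single 0 0 1
          * (1 + ∑ j, sigmaUp (a j) (b j))) := by
  have hconj : (starRingEnd ℂ ∘ starRingEnd ℂ) = id := funext Complex.conj_conj
  have hE : (Matrix.single 0 0 1 : Matrix (Fin 2) (Fin 2) ℂ).map (starRingEnd ℂ) =
      Matrix.single 0 0 1 := by simp [Matrix.map_single]
  rw [hatTwistedOneForm_eq_modelHat, hatTwistedOneForm_eq_modelHat, modelHat_modelD,
    modelD_eq_dressedD, twistedOneForm_dressedD]
  simp only [modelHat_dressedD, twistedOneForm_dressedD, dressedD_add, Matrix.map_mul,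
    Matrix.map_map, hconj, Matrix.map_id, hE, map_zero, zero_mul, add_zero]
  congr 1 <;> noncomm_ring

end OneForms

/-- for every finite family `(𝐚ⱼ, 𝐛ⱼ)` in `B = A_ev ⊕ A_ev`, there exist six
complex parameters `φ, φ', σ₁, σ₂, σ¹, σ²` expressing all matrix components of the
twisted-fluctuated operator `D_ω = D + ω₁ + ω̂₁ + ω₂` of the `U(1)×U(2)` model. -/
theorem twisted_U1xU2_fluctuation (kx ky : ℂ) (N : ℕ) (a b : Fin N → Bev) :
    ∃ φ φ' σ₁ σ₂ σ'₁ σ'₂ : ℂ,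
      let D := modelD kx ky
      let hat := fun x : Bev => modelHat (modelPi x)
      let ω₁ := ∑ j, modelPi (a j) * (D * modelPi (b j) - modelPi (modelFlip (b j)) * D)
      let ωhat₁ := ∑ j, hat (a j) * (D * hat (b j) - hat (modelFlip (b j)) * D)
      let ω₂ := ∑ j, hat (a j) * (ω₁ * hat (b j) - hat (modelFlip (b j)) * ω₁)
      let Dω := D + ω₁ + ωhat₁ + ω₂
      let sLow : Fin 2 → ℂ := ![σ₁, σ₂]
      let sUp : Fin 2 → ℂ := ![σ'₁, σ'₂]
      (∀ α i β j : Fin 2, Dω (Sum.inl (α, i)) (Sum.inl (β, j)) =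
        (kx * (1 + φ) * (if α = 0 then 1 else 0) * (if β = 1 then 1 else 0)
          + (starRingEnd ℂ) kx * (1 + φ') * (if α = 1 then 1 else 0)
            * (if β = 0 then 1 else 0)) * (if i = j then 1 else 0)) ∧
      (∀ α' i' β' j' : Fin 2, Dω (Sum.inr (α', i')) (Sum.inr (β', j')) =
        ((starRingEnd ℂ) kx * (1 + (starRingEnd ℂ) φ) * (if α' = 0 then 1 else 0)
            * (if β' = 1 then 1 else 0)
          + kx * (1 + (starRingEnd ℂ) φ') * (if α' = 1 then 1 else 0)
            * (if β' = 0 then 1 else 0)) * (if i' = j' then 1 else 0)) ∧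
      (∀ α' i' β j : Fin 2, Dω (Sum.inr (α', i')) (Sum.inl (β, j)) =
        ky * (if α' = 0 then 1 else 0) * (if β = 0 then 1 else 0)
          * (sLow i' + (if i' = 0 then 1 else 0))
          * ((starRingEnd ℂ) (sUp j) + (if j = 0 then 1 else 0))) ∧
      (∀ α i β' j' : Fin 2, Dω (Sum.inl (α, i)) (Sum.inr (β', j')) =
        (starRingEnd ℂ) ky * (if α = 0 then 1 else 0) * (if β' = 0 then 1 else 0)
          * ((starRingEnd ℂ) (sLow i) + (if i = 0 then 1 else 0))
          * (sUp j' + (if j' = 0 then 1 else 0))) := by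
  have hDω := modelD_add_oneForms_eq_dressedD a b kx ky
  set S := ∑ j, sigmaLow (a j) (b j)
  set T := ∑ j, sigmaUp (a j) (b j)
  refine ⟨∑ j, phiCoeff (a j) (b j), ∑ j, phiCoeff' (a j) (b j), S 0 0, S 1 0, T 0 0, T 0 1, ?_⟩
  intro D hat ω₁ ωhat₁ ω₂ Dω sLow sUp
  rw [show Dω = _ from hDω]
  refine ⟨fun _ _ _ _ => rfl, fun _ _ _ _ => rfl, fun α i β j => ?_, fun α i β j => ?_⟩ <;>
    simp only [dressedD, Matrix.of_apply, Matrix.mul_single_mul_apply, mul_one, mul_assoc] <;>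
    fin_cases i <;> fin_cases j <;> simp [sLow, sUp, add_comm]
end
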